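/- Let {X, S_i, p_i} be a measurable iterated function system on a separable metric space with ergodic invariant probability measure μ, and define h_N(μ,δ) = −∫ Σ_{ω^N ∈ I^N} p_{ω^N}(x) · inf_{y ∈ B_N(x,ω^N,δ)} log p_{ω^N}(y) dμ(x), where B_N(x,ω^N,δ) = {y : ρ(S_{ω^n}(y), S_{ω^n}(x)) < δ for all 0 ≤ n ≤ N}. If h_{N₁}(μ,δ) and h_{N₂}(μ,δ) exist (are finite), then h_{N₁+N₂}(μ,δ) ≤ h_{N₁}(μ,δ) + h_{N₂}(μ,δ). -/

import Mathlib

/-!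
Split a word of length `N₁ + N₂` as `uw`. If `y ∈ B(x, uw, δ)` then `y ∈ B(x, u, δ)` and
`S_u y ∈ B(S_u x, w, δ)`, while `log p_{uw}(y) = log p_u(y) + log p_w(S_u y)`; so the infimum
of `log p_{uw}` over `B(x, uw, δ)` is at least the sum of the two infima. Weighting by
`p_{uw}(x) = p_u(x) p_w(S_u x)` and summing over `w` (the weights `p_w` sum to one) gives the
pointwise bound `f_{N₁} + P^{N₁} f_{N₂} ≤ f_{N₁+N₂}` for the integrands `f_N` of `-h_N`, where
`P` is the Markov operator. Integrate, using `∫ P^{N₁} f dμ = ∫ f dμ` for the invariant `μ`.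
-/

open MeasureTheory Set
open scoped ENNReal NNReal

def iterWord {I X : Type*} (S : I → X → X) : List I → X → X
  | [], x => x
  | i :: l, x => iterWord S l (S i x)

def wtWord {I X : Type*} (S : I → X → X) (p : I → X → ℝ) : List I → X → ℝ
  | [], _ => 1
  | i :: l, x => p i x * wtWord S p l (S i x)

/-- `B_N(x, ω^N, δ)`: points whose trajectory along the word stays `δ`-close to that
of `x` for all times `0 ≤ n ≤ N`. -/
def ballN {I X : Type*} [MetricSpace X] (S : I → X → X) (δ : ℝ) (l : List I) (x : X) :
    Set X :=
  {y | ∀ m ≤ l.length, dist (iterWord S (l.take m) y) (iterWord S (l.take m) x) < δ}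

/-- The Markov operator kernel of the IFS. -/
noncomputable def ifsKernel {I X : Type*} [Fintype I] [MeasurableSpace X]
    (S : I → X → X) (p : I → X → ℝ) (x : X) : Measure X :=
  ∑ i : I, ENNReal.ofReal (p i x) • Measure.dirac (S i x)

/-- The integrand of `h_N(μ,δ)`:
`x ↦ Σ_{ω^N} p_{ω^N}(x) · inf_{y ∈ B_N(x,ω^N,δ)} log p_{ω^N}(y)`. -/
noncomputable def hIntegrand {I X : Type*} [Fintype I] [MetricSpace X]
    (S : I → X → X) (p : I → X → ℝ) (δ : ℝ) (N : ℕ) (x : X) : ℝ :=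
  ∑ v : Fin N → I, wtWord S p (List.ofFn v) x *
    sInf ((fun y => Real.log (wtWord S p (List.ofFn v) y)) '' ballN S δ (List.ofFn v) x)

/-- `h_N(μ,δ)`. -/
noncomputable def hN {I X : Type*} [Fintype I] [MetricSpace X] [MeasurableSpace X]
    (S : I → X → X) (p : I → X → ℝ) (μ : Measure X) (N : ℕ) (δ : ℝ) : ℝ :=
  -∫ x, hIntegrand S p δ N x ∂μ

section Words

variable {I X : Type*} (S : I → X → X) (p : I → X → ℝ)

@[simp] lemma iterWord_nil (x : X) : iterWord S [] x = x := rfl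

@[simp] lemma iterWord_cons (i : I) (l : List I) (x : X) :
    iterWord S (i :: l) x = iterWord S l (S i x) := rfl

@[simp] lemma wtWord_nil (x : X) : wtWord S p [] x = 1 := rfl

@[simp] lemma wtWord_cons (i : I) (l : List I) (x : X) :
    wtWord S p (i :: l) x = p i x * wtWord S p l (S i x) := rfl

lemma iterWord_append (l₁ l₂ : List I) (x : X) :
    iterWord S (l₁ ++ l₂) x = iterWord S l₂ (iterWord S l₁ x) := by
  induction l₁ generalizing x with
  | nil => rfl
  | cons i l ih => exact ih _

lemma wtWord_append (l₁ l₂ : List I) (x : X) :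
    wtWord S p (l₁ ++ l₂) x = wtWord S p l₁ x * wtWord S p l₂ (iterWord S l₁ x) := by
  induction l₁ generalizing x with
  | nil => simp
  | cons i l ih => simp [ih, mul_assoc]

variable {S p}

lemma wtWord_pos (hppos : ∀ i x, 0 < p i x) (l : List I) (x : X) : 0 < wtWord S p l x := by
  induction l generalizing x with
  | nil => exact one_pos
  | cons i l ih => exact mul_pos (hppos i x) (ih _)

end Words

section WordSums

variable {I M : Type*} [Fintype I] [AddCommMonoid M]

lemma sum_ofFn_succ (k : ℕ) (F : List I → M) :
    ∑ v : Fin (k + 1) → I, F (List.ofFn v)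
      = ∑ i : I, ∑ w : Fin k → I, F (i :: List.ofFn w) := by
  rw [← Fintype.sum_prod_type', ← (Fin.consEquiv fun _ => I).sum_comp]
  simp [Fin.consEquiv, List.ofFn_succ]

lemma sum_ofFn_add (m n : ℕ) (F : List I → M) :
    ∑ v : Fin (m + n) → I, F (List.ofFn v)
      = ∑ u : Fin m → I, ∑ w : Fin n → I, F (List.ofFn u ++ List.ofFn w) := by
  rw [← Fintype.sum_prod_type', ← (Fin.appendEquiv m n).sum_comp]
  exact Fintype.sum_congr _ _ fun v => congrArg F (List.ofFn_fin_append v.1 v.2)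

end WordSums

/-- `P^N g` for the Markov operator `P g (x) = Σ_i p_i(x) g(S_i x)` of the IFS. -/
def markovPow {I X : Type*} [Fintype I] (S : I → X → X) (p : I → X → ℝ) (N : ℕ)
    (g : X → ℝ) (x : X) : ℝ :=
  ∑ v : Fin N → I, wtWord S p (List.ofFn v) x * g (iterWord S (List.ofFn v) x)

section MarkovPow

variable {I X : Type*} [Fintype I] {S : I → X → X} {p : I → X → ℝ}

@[simp] lemma markovPow_zero (g : X → ℝ) : markovPow S p 0 g = g := by
  ext x
  simp [markovPow]

lemma markovPow_succ (N : ℕ) (g : X → ℝ) (x : X) :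
    markovPow S p (N + 1) g x = ∑ i : I, p i x * markovPow S p N g (S i x) := by
  simp only [markovPow, sum_ofFn_succ N fun l => wtWord S p l x * g (iterWord S l x),
    wtWord_cons, iterWord_cons, Finset.mul_sum, mul_assoc]

lemma sum_wtWord_eq_one (hp1 : ∀ x, ∑ i : I, p i x = 1) (N : ℕ) (x : X) :
    ∑ v : Fin N → I, wtWord S p (List.ofFn v) x = 1 := by
  suffices markovPow S p N (fun _ => 1) x = 1 by simpa [markovPow] using this
  induction N generalizing x with
  | zero => simp
  | succ N ih => simp [markovPow_succ, ih, hp1]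

end MarkovPow

section Balls

variable {I X : Type*} [MetricSpace X] {S : I → X → X} {δ : ℝ}

lemma mem_ballN_self (hδ : 0 < δ) (l : List I) (x : X) : x ∈ ballN S δ l x := by
  intro m _
  simpa using hδ

lemma ballN_append_subset_left (l₁ l₂ : List I) (x : X) :
    ballN S δ (l₁ ++ l₂) x ⊆ ballN S δ l₁ x := by
  intro y hy m hm
  simpa [List.take_append_of_le_length hm] using hy m (by simp; omega)

lemma mapsTo_iterWord_ballN_append (l₁ l₂ : List I) (x : X) :
    MapsTo (iterWord S l₁) (ballN S δ (l₁ ++ l₂) x)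
      (ballN S δ l₂ (iterWord S l₁ x)) := by
  intro y hy m hm
  simpa [List.take_append, List.take_of_length_le, iterWord_append]
    using hy (l₁.length + m) (by simp; omega)

end Balls

noncomputable def infLogWt {I X : Type*} [MetricSpace X] (S : I → X → X) (p : I → X → ℝ)
    (δ : ℝ) (l : List I) (x : X) : ℝ :=
  sInf ((fun y => Real.log (wtWord S p l y)) '' ballN S δ l x)

section Entropy

variable {I X : Type*} [MetricSpace X] {S : I → X → X} {p : I → X → ℝ} {δ : ℝ}

lemma infLogWt_add_le_append (hppos : ∀ i x, 0 < p i x) (hδ : 0 < δ) {l₁ l₂ : List I}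
    {x : X}
    (hb₁ : BddBelow ((fun y => Real.log (wtWord S p l₁ y)) '' ballN S δ l₁ x))
    (hb₂ : BddBelow ((fun y => Real.log (wtWord S p l₂ y)) ''
      ballN S δ l₂ (iterWord S l₁ x))) :
    infLogWt S p δ l₁ x + infLogWt S p δ l₂ (iterWord S l₁ x)
      ≤ infLogWt S p δ (l₁ ++ l₂) x := by
  refine le_csInf ⟨_, mem_image_of_mem _ (mem_ballN_self hδ _ x)⟩ ?_
  rintro _ ⟨y, hy, rfl⟩
  dsimp only
  rw [wtWord_append, Real.log_mul (wtWord_pos hppos _ _).ne' (wtWord_pos hppos _ _).ne']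
  exact add_le_add (csInf_le hb₁ ⟨y, ballN_append_subset_left l₁ l₂ x hy, rfl⟩)
    (csInf_le hb₂ ⟨_, mapsTo_iterWord_ballN_append l₁ l₂ x hy, rfl⟩)

variable [Fintype I]

lemma hIntegrand_eq_sum_infLogWt (N : ℕ) (x : X) :
    hIntegrand S p δ N x
      = ∑ v : Fin N → I, wtWord S p (List.ofFn v) x * infLogWt S p δ (List.ofFn v) x :=
  rfl

lemma hIntegrand_add_markovPow_le (hppos : ∀ i x, 0 < p i x) (hp1 : ∀ x, ∑ i : I, p i x = 1)
    (hδ : 0 < δ) (hbdd : ∀ (l : List I) (x : X),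
      BddBelow ((fun y => Real.log (wtWord S p l y)) '' ballN S δ l x))
    (N₁ N₂ : ℕ) (x : X) :
    hIntegrand S p δ N₁ x + markovPow S p N₁ (hIntegrand S p δ N₂) x
      ≤ hIntegrand S p δ (N₁ + N₂) x := by
  simp only [hIntegrand_eq_sum_infLogWt, markovPow, ← Finset.sum_add_distrib]
  rw [sum_ofFn_add N₁ N₂ fun l => wtWord S p l x * infLogWt S p δ l x]
  refine Finset.sum_le_sum fun u _ => ?_
  set a := wtWord S p (List.ofFn u) x
  set y := iterWord S (List.ofFn u) x
  calc a * infLogWt S p δ (List.ofFn u) x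
        + a * ∑ w : Fin N₂ → I, wtWord S p (List.ofFn w) y * infLogWt S p δ (List.ofFn w) y
      = ∑ w : Fin N₂ → I, a * wtWord S p (List.ofFn w) y
          * (infLogWt S p δ (List.ofFn u) x + infLogWt S p δ (List.ofFn w) y) := by
        simp only [mul_add, Finset.sum_add_distrib, ← Finset.sum_mul, ← Finset.mul_sum,
          sum_wtWord_eq_one hp1, mul_assoc, one_mul]
    _ ≤ _ := by
        refine Finset.sum_le_sum fun w _ => ?_
        rw [wtWord_append]
        exact mul_le_mul_of_nonneg_left (infLogWt_add_le_append hppos hδ (hbdd _ _) (hbdd _ _))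
          (mul_pos (wtWord_pos hppos _ _) (wtWord_pos hppos _ _)).le

end Entropy

namespace MeasureTheory

open ProbabilityTheory

variable {α β : Type*} [MeasurableSpace α] [MeasurableSpace β] {μ : Measure α}
  {κ : Kernel α β} {g : β → ℝ}

lemma integral_comp_kernel (hg : Integrable g (κ ∘ₘ μ)) :
    ∫ y, g y ∂(κ ∘ₘ μ) = ∫ x, ∫ y, g y ∂κ x ∂μ := by
  rw [Measure.comp_eq_comp_const_apply] at hg ⊢
  exact Kernel.integral_comp hg

lemma Integrable.integral_kernel_of_comp (hg : Integrable g (κ ∘ₘ μ)) :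
    Integrable (fun x => ∫ y, g y ∂κ x) μ := by
  rw [Measure.comp_eq_comp_const_apply] at hg
  exact hg.integral_comp

end MeasureTheory

lemma measurable_ifsKernel {I X : Type*} [Fintype I] [MeasurableSpace X] {S : I → X → X}
    {p : I → X → ℝ} (hS : ∀ i, Measurable (S i)) (hp : ∀ i, Measurable (p i)) :
    Measurable (ifsKernel S p) := by
  refine Measure.measurable_of_measurable_coe _ fun s hs => ?_
  simp only [ifsKernel, Measure.coe_finsetSum, Finset.sum_apply, Measure.smul_apply,
    Measure.dirac_apply' _ hs, smul_eq_mul]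
  exact Finset.measurable_sum _ fun i _ =>
    (ENNReal.measurable_ofReal.comp (hp i)).mul ((measurable_one.indicator hs).comp (hS i))

noncomputable def ifsMarkovKernel {I X : Type*} [Fintype I] [MeasurableSpace X]
    {S : I → X → X} {p : I → X → ℝ} (hS : ∀ i, Measurable (S i))
    (hp : ∀ i, Measurable (p i)) : ProbabilityTheory.Kernel X X :=
  ⟨ifsKernel S p, measurable_ifsKernel hS hp⟩

section Invariance

variable {I X : Type*} [Fintype I] [MeasurableSpace X] [MeasurableSingletonClass X]
  {S : I → X → X} {p : I → X → ℝ} {μ : Measure X}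

lemma integral_ifsKernel {x : X} (hpnn : ∀ i, 0 ≤ p i x) (g : X → ℝ) :
    ∫ y, g y ∂ifsKernel S p x = ∑ i : I, p i x * g (S i x) := by
  rw [ifsKernel, integral_finsetSum_measure fun i _ =>
    (integrable_dirac enorm_lt_top).smul_measure ENNReal.ofReal_ne_top]
  simp [integral_smul_measure, integral_dirac, ENNReal.toReal_ofReal (hpnn _)]

lemma markovPow_succ_eq_integral (hpnn : ∀ i x, 0 ≤ p i x) (N : ℕ) (g : X → ℝ) :
    markovPow S p (N + 1) g = fun x => ∫ y, markovPow S p N g y ∂ifsKernel S p x := by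
  ext x
  rw [markovPow_succ, integral_ifsKernel (hpnn · x)]

lemma integrable_markovPow (hS : ∀ i, Measurable (S i)) (hp : ∀ i, Measurable (p i))
    (hpnn : ∀ i x, 0 ≤ p i x) (hμinv : μ.bind (ifsKernel S p) = μ) {g : X → ℝ}
    (hg : Integrable g μ) (N : ℕ) : Integrable (markovPow S p N g) μ := by
  have hinv : μ.bind (ifsMarkovKernel hS hp) = μ := hμinv
  induction N with
  | zero => simpa using hg
  | succ N ih =>
    rw [markovPow_succ_eq_integral hpnn]
    exact Integrable.integral_kernel_of_comp (κ := ifsMarkovKernel hS hp) (by rwa [hinv])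

lemma integral_markovPow (hS : ∀ i, Measurable (S i)) (hp : ∀ i, Measurable (p i))
    (hpnn : ∀ i x, 0 ≤ p i x) (hμinv : μ.bind (ifsKernel S p) = μ) {g : X → ℝ}
    (hg : Integrable g μ) (N : ℕ) : ∫ x, markovPow S p N g x ∂μ = ∫ x, g x ∂μ := by
  have hinv : μ.bind (ifsMarkovKernel hS hp) = μ := hμinv
  induction N with
  | zero => simp
  | succ N ih =>
    have hPN : Integrable (markovPow S p N g) (μ.bind (ifsMarkovKernel hS hp)) := by
      rw [hinv]; exact integrable_markovPow hS hp hpnn hμinv hg N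
    calc ∫ x, markovPow S p (N + 1) g x ∂μ
        = ∫ x, ∫ y, markovPow S p N g y ∂ifsMarkovKernel hS hp x ∂μ := by
          rw [markovPow_succ_eq_integral hpnn]; rfl
      _ = ∫ x, markovPow S p N g x ∂μ.bind (ifsMarkovKernel hS hp) :=
          (integral_comp_kernel hPN).symm
      _ = ∫ x, g x ∂μ := by rw [hinv, ih]

end Invariance

theorem stmt16_general {X I : Type*} [MetricSpace X]
    [MeasurableSpace X] [BorelSpace X] [Fintype I]
    (S : I → X → X) (hS : ∀ i, Measurable (S i))
    (p : I → X → ℝ) (hp : ∀ i, Measurable (p i))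
    (hppos : ∀ i x, 0 < p i x) (hp1 : ∀ x, ∑ i : I, p i x = 1)
    (μ : Measure X) (hμinv : μ.bind (ifsKernel S p) = μ)
    (δ : ℝ) (hδ : 0 < δ) (N₁ N₂ : ℕ)
    (hbdd : ∀ (l : List I) (x : X),
      BddBelow ((fun y => Real.log (wtWord S p l y)) '' ballN S δ l x))
    (hint₁ : Integrable (hIntegrand S p δ N₁) μ)
    (hint₂ : Integrable (hIntegrand S p δ N₂) μ)
    (hint₁₂ : Integrable (hIntegrand S p δ (N₁ + N₂)) μ) :
    hN S p μ (N₁ + N₂) δ ≤ hN S p μ N₁ δ + hN S p μ N₂ δ := by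
  have hpnn : ∀ i x, 0 ≤ p i x := fun i x => (hppos i x).le
  have hP := integrable_markovPow hS hp hpnn hμinv hint₂ N₁
  have key : ∫ x, hIntegrand S p δ N₁ x ∂μ + ∫ x, hIntegrand S p δ N₂ x ∂μ
      ≤ ∫ x, hIntegrand S p δ (N₁ + N₂) x ∂μ := by
    rw [← integral_markovPow hS hp hpnn hμinv hint₂ N₁, ← integral_add' hint₁ hP]
    exact integral_mono (hint₁.add hP) hint₁₂
      (hIntegrand_add_markovPow_le hppos hp1 hδ hbdd N₁ N₂)
  simp only [hN]
  linarith

/-- For a measurable IFS with positive probabilities and ergodic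
invariant probability measure `μ`, if `h_{N₁}(μ,δ)` and `h_{N₂}(μ,δ)` exist (are finite)
then `h_{N₁+N₂}(μ,δ) ≤ h_{N₁}(μ,δ) + h_{N₂}(μ,δ)`. -/
theorem stmt16 {X I : Type*} [MetricSpace X] [TopologicalSpace.SeparableSpace X]
    [MeasurableSpace X] [BorelSpace X] [Fintype I] (hcard : 2 ≤ Fintype.card I)
    (S : I → X → X) (hS : ∀ i, Measurable (S i))
    (p : I → X → ℝ) (hp : ∀ i, Measurable (p i))
    (hppos : ∀ i x, 0 < p i x) (hp1 : ∀ x, ∑ i : I, p i x = 1)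
    (μ : Measure X) [IsProbabilityMeasure μ] (hμinv : μ.bind (ifsKernel S p) = μ)
    (herg : ∀ A : Set X, MeasurableSet A →
      (∀ᵐ x ∂μ, ifsKernel S p x A = A.indicator (fun _ => (1 : ℝ≥0∞)) x) →
      μ A = 0 ∨ μ A = 1)
    (δ : ℝ) (hδ : 0 < δ) (N₁ N₂ : ℕ)
    (hbdd : ∀ (l : List I) (x : X),
      BddBelow ((fun y => Real.log (wtWord S p l y)) '' ballN S δ l x))
    (hint₁ : Integrable (hIntegrand S p δ N₁) μ)
    (hint₂ : Integrable (hIntegrand S p δ N₂) μ)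
    (hint₁₂ : Integrable (hIntegrand S p δ (N₁ + N₂)) μ) :
    hN S p μ (N₁ + N₂) δ ≤ hN S p μ N₁ δ + hN S p μ N₂ δ :=
  stmt16_general S hS p hp hppos hp1 μ hμinv δ hδ N₁ N₂ hbdd hint₁ hint₂ hint₁₂
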